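/- arXiv:2212.10359 — 2 statements merged into one kernel-verified Lean document; each statement's English description precedes it below -/
import Mathlib

section
/- Suppose that for every integer $l \ge 0$ the coefficients of an absolutely summable sequence $(a_k)_{k \ge 0}$ satisfy $\sum_{k \ge l} |a_k| \le C (1 \vee l)^{-\zeta}$ for some constants $C > 0$ and $\zeta > 1$. Then the autocovariances $\gamma(k) = \sum_{j \ge 0} a_j a_{j+k}$ of the associated MA($\infty$) process satisfy $\sum_{k \ge L} |\gamma(k)| \le C' L^{-\zeta+1}$ for all integers $L \ge 1$ and some constant $C' > 0$ depending only on $C$ and $\zeta$. -/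
/-- Polynomial decay of MA coefficient tails implies polynomial decay of the
autocovariance tails: if `∑_{k≥l}|a_k| ≤ C (1 ∨ l)^{-ζ}` then
`∑_{k≥L}|γ(k)| ≤ C' L^{-ζ+1}` where `γ(k) = ∑_j a_j a_{j+k}`. -/
theorem autocovariance_tail_decay (a : ℕ → ℝ) (C ζ : ℝ) (hC : 0 < C) (hζ : 1 < ζ)
    (hsum : Summable fun k => |a k|)
    (htail : ∀ l : ℕ, ∑' k : ℕ, |a (l + k)| ≤ C * (max 1 (l : ℝ)) ^ (-ζ)) :
    ∃ C' > 0, ∀ L : ℕ, 1 ≤ L →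
      ∑' k : ℕ, |∑' j : ℕ, a j * a (j + (L + k))| ≤ C' * (L : ℝ) ^ (-ζ + 1) := by
  refine ⟨C * C, mul_pos hC hC, ?_⟩
  intro L hL
  have hL1 : (1 : ℝ) ≤ (L : ℝ) := by exact_mod_cast hL
  have hL0 : (0 : ℝ) < (L : ℝ) := lt_of_lt_of_le one_pos hL1
  have hA : ∑' k, |a k| ≤ C := by
    have h := htail 0
    simpa using h
  have hAnn : 0 ≤ ∑' k, |a k| := tsum_nonneg fun k => abs_nonneg _
  -- tail bound: for every m, ∑' k, |a (m+k)| ≤ C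
  have htail_le_C : ∀ m : ℕ, ∑' k, |a (m + k)| ≤ C := by
    intro m
    refine (htail m).trans ?_
    have h1 : (1 : ℝ) ≤ max 1 (m : ℝ) := le_max_left _ _
    have : (max 1 (m : ℝ)) ^ (-ζ) ≤ 1 :=
      Real.rpow_le_one_of_one_le_of_nonpos h1 (by linarith)
    nlinarith
  -- summability of each inner family
  have hinner : ∀ m : ℕ, Summable fun j => |a j| * |a (j + m)| := by
    intro m
    refine Summable.of_nonneg_of_le (fun j => mul_nonneg (abs_nonneg _) (abs_nonneg _))
      (fun j => ?_) (hsum.mul_right (∑' k, |a k|))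
    have : |a (j + m)| ≤ ∑' k, |a k| := Summable.le_tsum hsum (j + m) (fun _ _ => abs_nonneg _)
    exact mul_le_mul_of_nonneg_left this (abs_nonneg _)
  -- summability of the double family
  have hg : Summable fun p : ℕ × ℕ => |a p.1| * |a (p.1 + (L + p.2))| := by
    rw [summable_prod_of_nonneg (fun p => mul_nonneg (abs_nonneg _) (abs_nonneg _))]
    constructor
    · intro j
      have : Summable fun k => |a ((j + L) + k)| := by
        have := (summable_nat_add_iff (f := fun k => |a k|) (j + L)).2 hsum
        exact this.congr fun k => by rw [add_comm k (j + L)]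
      have := this.mul_left |a j|
      exact this.congr fun k => by ring_nf
    · refine Summable.of_nonneg_of_le
        (fun j => tsum_nonneg fun k => mul_nonneg (abs_nonneg _) (abs_nonneg _))
        (fun j => ?_) (hsum.mul_right C)
      have heq : (∑' k, |a j| * |a (j + (L + k))|) = |a j| * ∑' k, |a ((j + L) + k)| := by
        rw [← tsum_mul_left]
        exact tsum_congr fun k => by rw [show j + (L + k) = (j + L) + k by ring]
      rw [heq]
      exact mul_le_mul_of_nonneg_left (htail_le_C (j + L)) (abs_nonneg _)
  -- summability of slices in k
  have hslice : ∀ k : ℕ, Summable fun j => |a j| * |a (j + (L + k))| := fun k => hinner (L + k)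
  have houter : Summable fun k => ∑' j, |a j| * |a (j + (L + k))| := by
    have := (summable_prod_of_nonneg
      (f := fun p : ℕ × ℕ => |a p.2| * |a (p.2 + (L + p.1))|)
      (fun p => mul_nonneg (abs_nonneg _) (abs_nonneg _))).1 hg.prod_symm
    exact this.2
  -- key rpow bound
  have hrpow : ∀ m : ℕ, C * (max 1 ((m + L : ℕ) : ℝ)) ^ (-ζ) ≤ C * (L : ℝ) ^ (-ζ) := by
    intro m
    refine mul_le_mul_of_nonneg_left ?_ hC.le
    refine Real.rpow_le_rpow_of_nonpos hL0 ?_ (by linarith)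
    refine le_max_of_le_right ?_
    push_cast
    linarith [Nat.cast_nonneg (α := ℝ) m]
  calc ∑' k : ℕ, |∑' j : ℕ, a j * a (j + (L + k))|
      ≤ ∑' k : ℕ, ∑' j, |a j| * |a (j + (L + k))| := by
        refine Summable.tsum_le_tsum (fun k => ?_) ?_ houter
        · have hs : Summable fun j => |a j * a (j + (L + k))| :=
            (hslice k).congr fun j => (abs_mul _ _).symm
          simpa using norm_tsum_le_tsum_norm (f := fun j => a j * a (j + (L + k))) hs
        · refine Summable.of_nonneg_of_le (fun k => abs_nonneg _) (fun k => ?_) houter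
          have hs : Summable fun j => |a j * a (j + (L + k))| :=
            (hslice k).congr fun j => (abs_mul _ _).symm
          simpa using norm_tsum_le_tsum_norm (f := fun j => a j * a (j + (L + k))) hs
    _ = ∑' j : ℕ, ∑' k, |a j| * |a (j + (L + k))| :=
        Summable.tsum_comm (f := fun j k => |a j| * |a (j + (L + k))|) hg
    _ ≤ ∑' j : ℕ, |a j| * (C * (L : ℝ) ^ (-ζ)) := by
        refine Summable.tsum_le_tsum (fun j => ?_) ?_ (hsum.mul_right _)
        · have heq : (∑' k, |a j| * |a (j + (L + k))|) = |a j| * ∑' k, |a ((j + L) + k)| := by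
            rw [← tsum_mul_left]
            exact tsum_congr fun k => by rw [show j + (L + k) = (j + L) + k by ring]
          rw [heq]
          refine mul_le_mul_of_nonneg_left ?_ (abs_nonneg _)
          refine (htail (j + L)).trans ?_
          simpa [add_comm j L] using hrpow j
        · exact ((summable_prod_of_nonneg
            (fun p => mul_nonneg (abs_nonneg _) (abs_nonneg _))).1 hg).2
    _ = (∑' j, |a j|) * (C * (L : ℝ) ^ (-ζ)) := tsum_mul_right
    _ ≤ C * (C * (L : ℝ) ^ (-ζ)) := by
        refine mul_le_mul_of_nonneg_right hA ?_
        positivity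
    _ ≤ C * C * (L : ℝ) ^ (-ζ + 1) := by
        rw [mul_assoc]
        refine mul_le_mul_of_nonneg_left (mul_le_mul_of_nonneg_left ?_ hC.le) hC.le
        exact Real.rpow_le_rpow_of_exponent_le hL1 (by linarith)
end

section
/- (High-dimensional Freedman inequality) Let $\mathcal{A}$ be a finite index set, and for each $a \in \mathcal{A}$ let $(\xi_{a,i})_{i=1}^n$ be a martingale difference sequence with respect to a common filtration $(\mathcal{F}_i)_{i=1}^n$. Let $M_a = \sum_{i=1}^n \xi_{a,i}$ and $V_a = \sum_{i=1}^n \mathbb{E}[\xi_{a,i}^2 \mid \mathcal{F}_{i-1}]$. Then for any $z, u, v > 0$: $\mathbb{P}(\max_{a \in \mathcal{A}} |M_a| \ge z) \le \sum_{i=1}^n \mathbb{P}(\max_{a \in \mathcal{A}} |\xi_{a,i}| \ge u) + 2\,\mathbb{P}(\max_{a \in \mathcal{A}} V_a \ge v) + 2|\mathcal{A}| \exp\big(-z^2/(2zu + 2v)\big).$ -/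
open MeasureTheory
open scoped ENNReal

section freedman_aux
open Real

section analysis
lemma aux_nonneg_of_deriv {f f' : ℝ → ℝ} (hd : ∀ t, HasDerivAt f (f' t) t)
    (h0 : f 0 = 0) (h' : ∀ t, 0 ≤ t → 0 ≤ f' t) {t : ℝ} (ht : 0 ≤ t) : 0 ≤ f t := by
  have hmono : MonotoneOn f (Set.Ici (0:ℝ)) := by
    apply monotoneOn_of_deriv_nonneg (convex_Ici 0)
    · exact fun x _ => (hd x).continuousAt.continuousWithinAt
    · exact fun x _ => ((hd x).differentiableAt).differentiableWithinAt
    · intro x hx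
      rw [interior_Ici] at hx
      rw [(hd x).deriv]
      exact h' x hx.le
  have := hmono Set.self_mem_Ici ht ht
  rwa [h0] at this

lemma aux_exp_quad_neg {y : ℝ} (hy : y ≤ 0) : Real.exp y ≤ 1 + y + y ^ 2 / 2 := by
  have key : 0 ≤ 1 + -(-y) + (-y) ^ 2 / 2 - Real.exp (-(-y)) := by
    apply aux_nonneg_of_deriv (f := fun t => 1 + -t + t ^ 2 / 2 - Real.exp (-t))
      (f' := fun t => -1 + t + Real.exp (-t)) ?_ (by norm_num) ?_ (neg_nonneg.2 hy)
    · intro t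
      have h1 : HasDerivAt (fun t : ℝ => Real.exp (-t)) (-Real.exp (-t)) t := by
        simpa [Pi.add_def, Pi.sub_def, Pi.neg_def, Pi.mul_def, Function.comp_def] using (Real.hasDerivAt_exp (-t)).comp t ((hasDerivAt_id t).neg)
      have h2 : HasDerivAt (fun t : ℝ => 1 + -t + t ^ 2 / 2) (-1 + t) t := by
        have := ((hasDerivAt_pow 2 t).div_const 2)
        have := ((hasDerivAt_const t (1:ℝ)).add ((hasDerivAt_id t).neg)).add this
        simpa [Pi.add_def, Pi.sub_def, Pi.neg_def, Pi.mul_def, Function.comp_def] using this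
      simpa [sub_eq_add_neg, Pi.add_def, Pi.neg_def] using h2.sub h1
    · intro t ht
      show (0:ℝ) ≤ -1 + t + Real.exp (-t)
      have := Real.add_one_le_exp (-t)
      linarith
  have hyy : -(-y) = y := neg_neg y
  rw [hyy, neg_sq] at key
  linarith

lemma aux_two_sub {t : ℝ} (ht : 0 ≤ t) : 2 * (1 - t) * Real.exp t ≤ 2 - t ^ 2 := by
  have key : 0 ≤ 2 - t ^ 2 - 2 * (1 - t) * Real.exp t := by
    apply aux_nonneg_of_deriv (f := fun s => 2 - s ^ 2 - 2 * (1 - s) * Real.exp s)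
      (f' := fun s => -2 * s + 2 * s * Real.exp s) ?_ (by norm_num) ?_ ht
    · intro s
      have h1 : HasDerivAt (fun s : ℝ => 2 * (1 - s) * Real.exp s)
          ((2 * (-1)) * Real.exp s + 2 * (1 - s) * Real.exp s) s := by
        have ha : HasDerivAt (fun s : ℝ => 2 * (1 - s)) (2 * (-1)) s := by
          have := ((hasDerivAt_const s (1:ℝ)).sub (hasDerivAt_id s)).const_mul (2:ℝ)
          simpa using this
        simpa [Pi.add_def, Pi.sub_def, Pi.neg_def, Pi.mul_def, Function.comp_def] using ha.mul (Real.hasDerivAt_exp s)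
      have h2 : HasDerivAt (fun s : ℝ => 2 - s ^ 2) (-(2 * s)) s := by
        have := (hasDerivAt_const s (2:ℝ)).sub (hasDerivAt_pow 2 s)
        simpa [Pi.add_def, Pi.sub_def, Pi.neg_def, Pi.mul_def, Function.comp_def] using this
      have := h2.sub h1
      simp only [Pi.sub_def] at this
      exact this.congr_deriv (by ring)
    · intro s hs
      show (0:ℝ) ≤ -2 * s + 2 * s * Real.exp s
      have := Real.one_le_exp hs
      nlinarith
  linarith

lemma aux_key {Y y : ℝ} (hY0 : 0 ≤ Y) (hY1 : Y < 1) (hy : y ≤ Y) :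
    Real.exp y ≤ 1 + y + y ^ 2 / (2 * (1 - Y)) := by
  have h1Y : 0 < 1 - Y := by linarith
  rcases le_or_gt y 0 with h | h
  · have := aux_exp_quad_neg h
    have h2 : y ^ 2 / 2 ≤ y ^ 2 / (2 * (1 - Y)) := by
      apply div_le_div_of_nonneg_left (sq_nonneg y) (by linarith)
      nlinarith
    linarith
  · have h1y : 0 < 1 - y := by linarith
    have h2 := aux_two_sub h.le
    have h3 : Real.exp y ≤ (2 - y ^ 2) / (2 * (1 - y)) := by
      rw [le_div_iff₀ (by linarith)]
      linarith [h2]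
    have h4 : (2 - y ^ 2) / (2 * (1 - y)) = 1 + y + y ^ 2 / (2 * (1 - y)) := by
      field_simp
      ring
    have h5 : y ^ 2 / (2 * (1 - y)) ≤ y ^ 2 / (2 * (1 - Y)) := by
      apply div_le_div_of_nonneg_left (sq_nonneg y) (by linarith)
      nlinarith
    linarith
end analysis

section core
variable {Ω : Type*} [m0 : MeasurableSpace Ω] (μ : Measure Ω) [IsProbabilityMeasure μ]

lemma freedman_core (n : ℕ) (ℱ : Filtration ℕ m0) (η : ℕ → Ω → ℝ)
    (hadapted : ∀ i, StronglyMeasurable[ℱ i] (η i))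
    (hint : ∀ i, Integrable (η i) μ)
    (hint2 : ∀ i, Integrable (fun ω => (η i ω) ^ 2) μ)
    (hmds : ∀ i, 1 ≤ i → μ[η i | ℱ (i - 1)] ≤ᵐ[μ] 0)
    (z u v : ℝ) (hz : 0 < z) (hu : 0 < u) (hv : 0 < v) :
    μ {ω | z ≤ ∑ i ∈ Finset.Icc 1 n, min (η i ω) u ∧
        ∑ i ∈ Finset.Icc 1 n, (μ[fun ω' => (η i ω') ^ 2 | ℱ (i - 1)]) ω ≤ v} ≤
      ENNReal.ofReal (Real.exp (-z ^ 2 / (2 * z * u + 2 * v))) := by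
  have hzuv : (0:ℝ) < z * u + v := by positivity
  set l : ℝ := z / (z * u + v) with hl
  set c : ℝ := l ^ 2 / (2 * (1 - l * u)) with hc
  have hl0 : 0 < l := div_pos hz hzuv
  have hlu0 : 0 ≤ l * u := by positivity
  have hlu1 : l * u < 1 := by
    rw [hl, div_mul_eq_mul_div, div_lt_one hzuv]
    linarith
  have hc0 : 0 ≤ c := by
    rw [hc]
    have : 0 < 1 - l * u := by linarith
    positivity
  -- notation
  set σ : ℕ → Ω → ℝ := fun i => μ[fun ω' => (η i ω') ^ 2 | ℱ (i - 1)] with hσ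
  set X : ℕ → Ω → ℝ := fun i ω => min (η i ω) u with hX
  set W : ℕ → Ω → ℝ := fun k ω =>
    Real.exp (l * ∑ i ∈ Finset.Icc 1 k, X i ω - c * ∑ i ∈ Finset.Icc 1 k, σ i ω) with hW
  -- basic facts
  have hσ0 : ∀ i, (0:Ω → ℝ) ≤ᵐ[μ] σ i := fun i =>
    condExp_nonneg (ae_of_all μ fun ω => sq_nonneg _)
  have hσint : ∀ i, Integrable (σ i) μ := fun i => integrable_condExp
  have hXle : ∀ i ω, X i ω ≤ u := fun i ω => min_le_right _ _
  have hXleη : ∀ i ω, X i ω ≤ η i ω := fun i ω => min_le_left _ _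
  have hXsq : ∀ i ω, X i ω ^ 2 ≤ η i ω ^ 2 := by
    intro i ω
    rcases le_total (η i ω) u with h | h
    · simp [hX, min_eq_left h]
    · have : X i ω = u := min_eq_right h
      rw [this]
      nlinarith
  have hXmeas : ∀ i, StronglyMeasurable[ℱ i] (X i) := fun i =>
    (Measurable.min (hadapted i).measurable measurable_const).stronglyMeasurable
  have hXint : ∀ i, Integrable (X i) μ := by
    intro i
    refine Integrable.mono' ((hint i).abs.add (integrable_const |u|))
      (((hXmeas i).mono (ℱ.le i)).aestronglyMeasurable) (ae_of_all μ fun ω => ?_)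
    simp only [Pi.add_apply]
    rw [Real.norm_eq_abs]
    have hmin : |min (η i ω) u| ≤ |η i ω| + |u| := by
      rcases le_total (η i ω) u with h | h
      · rw [min_eq_left h]
        have := abs_nonneg u
        linarith
      · rw [min_eq_right h]
        have := abs_nonneg (η i ω)
        linarith [le_abs_self u, neg_abs_le u]
    exact hmin
  have hXsqint : ∀ i, Integrable (fun ω => X i ω ^ 2) μ := by
    intro i
    refine Integrable.mono' (hint2 i) ?_ (ae_of_all μ fun ω => ?_)
    · exact ((((hXmeas i).mono (ℱ.le i)).measurable.pow_const 2).stronglyMeasurable.aestronglyMeasurable)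
    · rw [Real.norm_eq_abs, abs_of_nonneg (sq_nonneg _)]
      exact hXsq i ω
  -- pointwise key inequality
  have hkey : ∀ i ω, Real.exp (l * X i ω) ≤ 1 + l * X i ω + c * X i ω ^ 2 := by
    intro i ω
    have h1 := aux_key hlu0 hlu1 (mul_le_mul_of_nonneg_left (hXle i ω) hl0.le)
    have h2 : (l * X i ω) ^ 2 / (2 * (1 - l * u)) = c * X i ω ^ 2 := by
      rw [hc]; ring
    rw [h2] at h1
    exact h1
  -- measurability and integrability of W
  have hQ : ∀ᵐ ω ∂μ, ∀ i, 0 ≤ σ i ω := (ae_all_iff).2 fun i => hσ0 i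
  have hWmeas : ∀ k, StronglyMeasurable[ℱ k] (W k) := by
    intro k
    apply Continuous.comp_stronglyMeasurable Real.continuous_exp
    apply StronglyMeasurable.sub
    · apply StronglyMeasurable.const_mul
      apply Finset.stronglyMeasurable_fun_sum
      intro i hi
      exact (hXmeas i).mono (ℱ.mono (Finset.mem_Icc.mp hi).2)
    · apply StronglyMeasurable.const_mul
      apply Finset.stronglyMeasurable_fun_sum
      intro i hi
      exact (stronglyMeasurable_condExp).mono (ℱ.mono (le_trans (Nat.sub_le i 1) (Finset.mem_Icc.mp hi).2))
  have hsumX : ∀ k ω, ∑ i ∈ Finset.Icc 1 k, X i ω ≤ k * u := by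
    intro k ω
    calc ∑ i ∈ Finset.Icc 1 k, X i ω ≤ (Finset.Icc 1 k).card • u :=
          Finset.sum_le_card_nsmul _ _ u (fun i _ => hXle i ω)
      _ = k * u := by rw [Nat.card_Icc]; simp [nsmul_eq_mul]
  have hWbdd : ∀ k, ∀ᵐ ω ∂μ, ‖W k ω‖ ≤ Real.exp (l * (k * u)) := by
    intro k
    filter_upwards [hQ] with ω hω
    rw [Real.norm_eq_abs, abs_of_pos (Real.exp_pos _), Real.exp_le_exp]
    have h1 : 0 ≤ ∑ i ∈ Finset.Icc 1 k, σ i ω := Finset.sum_nonneg fun i _ => hω i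
    have h2 := hsumX k ω
    nlinarith [mul_le_mul_of_nonneg_left h2 hl0.le]
  have hWint : ∀ k, Integrable (W k) μ := by
    intro k
    exact Integrable.mono' (integrable_const (Real.exp (l * (k * u))))
      ((hWmeas k).mono (ℱ.le k)).aestronglyMeasurable (hWbdd k)
  -- the supermartingale induction
  have hind : ∀ k, ∫ ω, W k ω ∂μ ≤ 1 := by
    intro k
    induction k with
    | zero => simp [hW]
    | succ k ih =>
      -- notation
      have hkk : (k + 1) - 1 = k := rfl
      have hm : ℱ k ≤ m0 := ℱ.le k
      set G : Ω → ℝ := fun ω =>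
        Real.exp (l * ∑ i ∈ Finset.Icc 1 k, X i ω - c * ∑ i ∈ Finset.Icc 1 k, σ i ω
          - c * σ (k + 1) ω) with hG
      set H : Ω → ℝ := fun ω => Real.exp (l * X (k + 1) ω) with hH
      have hσc : σ (k + 1) = μ[fun ω' => (η (k+1) ω') ^ 2 | ℱ k] := rfl
      have hsum : ∀ ω : Ω, l * ∑ i ∈ Finset.Icc 1 (k+1), X i ω - c * ∑ i ∈ Finset.Icc 1 (k+1), σ i ω
          = (l * ∑ i ∈ Finset.Icc 1 k, X i ω - c * ∑ i ∈ Finset.Icc 1 k, σ i ω - c * σ (k+1) ω)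
            + l * X (k+1) ω := by
        intro ω
        rw [Finset.sum_Icc_succ_top (Nat.one_le_iff_ne_zero.mpr (Nat.succ_ne_zero k)) (fun i => X i ω),
          Finset.sum_Icc_succ_top (Nat.one_le_iff_ne_zero.mpr (Nat.succ_ne_zero k)) (fun i => σ i ω)]
        ring
      have hWGH : ∀ ω, W (k + 1) ω = G ω * H ω := by
        intro ω
        show Real.exp (l * ∑ i ∈ Finset.Icc 1 (k+1), X i ω - c * ∑ i ∈ Finset.Icc 1 (k+1), σ i ω)
          = Real.exp (l * ∑ i ∈ Finset.Icc 1 k, X i ω - c * ∑ i ∈ Finset.Icc 1 k, σ i ω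
              - c * σ (k+1) ω) * Real.exp (l * X (k+1) ω)
        rw [← Real.exp_add, hsum ω]
      -- measurability
      have hGmeas : StronglyMeasurable[ℱ k] G := by
        apply Continuous.comp_stronglyMeasurable Real.continuous_exp
        apply StronglyMeasurable.sub
        · apply StronglyMeasurable.sub
          · apply StronglyMeasurable.const_mul
            apply Finset.stronglyMeasurable_fun_sum
            intro i hi
            exact (hXmeas i).mono (ℱ.mono (Finset.mem_Icc.mp hi).2)
          · apply StronglyMeasurable.const_mul
            apply Finset.stronglyMeasurable_fun_sum
            intro i hi
            exact (stronglyMeasurable_condExp).mono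
              (ℱ.mono (le_trans (Nat.sub_le i 1) (Finset.mem_Icc.mp hi).2))
        · exact (stronglyMeasurable_condExp.const_mul c).mono (le_of_eq rfl)
      have hHmeas : StronglyMeasurable H :=
        Real.continuous_exp.comp_stronglyMeasurable
          (((hXmeas (k+1)).mono (ℱ.le (k+1))).const_mul l)
      have hHpos : ∀ ω, 0 < H ω := fun ω => Real.exp_pos _
      have hHle : ∀ ω, H ω ≤ Real.exp (l * u) := fun ω =>
        Real.exp_le_exp.2 (mul_le_mul_of_nonneg_left (hXle (k+1) ω) hl0.le)
      have hHint : Integrable H μ :=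
        Integrable.mono' (integrable_const (Real.exp (l * u))) hHmeas.aestronglyMeasurable
          (ae_of_all μ fun ω => by
            rw [Real.norm_eq_abs, abs_of_pos (hHpos ω)]; exact hHle ω)
      have hGbdd : ∀ᵐ ω ∂μ, ‖G ω‖ ≤ Real.exp (l * (k * u)) := by
        filter_upwards [hQ] with ω hω
        rw [Real.norm_eq_abs, abs_of_pos (Real.exp_pos _), Real.exp_le_exp]
        have h1 : 0 ≤ ∑ i ∈ Finset.Icc 1 k, σ i ω := Finset.sum_nonneg fun i _ => hω i
        have h2 : 0 ≤ σ (k+1) ω := hω (k+1)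
        have h3 := hsumX k ω
        nlinarith [mul_le_mul_of_nonneg_left h3 hl0.le]
      have hGint : Integrable G μ :=
        Integrable.mono' (integrable_const (Real.exp (l * (k * u))))
          (hGmeas.mono hm).aestronglyMeasurable hGbdd
      have hGHint : Integrable (G * H) μ := by
        refine Integrable.mono' (integrable_const (Real.exp (l * (k * u)) * Real.exp (l * u)))
          ((hGmeas.mono hm).mul hHmeas).aestronglyMeasurable ?_
        filter_upwards [hGbdd] with ω hω
        simp only [Pi.mul_apply, Real.norm_eq_abs, abs_mul]
        rw [Real.norm_eq_abs] at hω
        have := abs_of_pos (hHpos ω)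
        apply mul_le_mul hω (by rw [this]; exact hHle ω) (abs_nonneg _) (Real.exp_pos _).le
      -- Step A : conditional expectation bound for H
      have hPint : Integrable (fun ω => 1 + l * X (k+1) ω + c * X (k+1) ω ^ 2) μ := by
        apply Integrable.add
        · exact (integrable_const 1).add ((hXint (k+1)).const_mul l)
        · exact (hXsqint (k+1)).const_mul c
      have hA : μ[H | ℱ k] ≤ᵐ[μ] fun ω => Real.exp (c * σ (k+1) ω) := by
        have h1 : μ[H | ℱ k] ≤ᵐ[μ] μ[fun ω => 1 + l * X (k+1) ω + c * X (k+1) ω ^ 2 | ℱ k] :=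
          condExp_mono hHint hPint (ae_of_all μ fun ω => hkey (k+1) ω)
        have hsplit : (fun ω => 1 + l * X (k+1) ω + c * X (k+1) ω ^ 2)
            = (fun _ : Ω => (1:ℝ)) + ((fun ω => l * X (k+1) ω) + fun ω => c * X (k+1) ω ^ 2) := by
          funext ω; simp only [Pi.add_apply]; ring
        have h2 : μ[fun ω => 1 + l * X (k+1) ω + c * X (k+1) ω ^ 2 | ℱ k]
            =ᵐ[μ] (fun _ => (1:ℝ)) + (μ[fun ω => l * X (k+1) ω | ℱ k]
              + μ[fun ω => c * X (k+1) ω ^ 2 | ℱ k]) := by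
          rw [hsplit]
          refine (condExp_add (integrable_const 1)
            (((hXint (k+1)).const_mul l).add ((hXsqint (k+1)).const_mul c)) _).trans ?_
          have hcst := condExp_const (μ := μ) (ℱ.le k) (1:ℝ)
          refine Filter.EventuallyEq.add (by rw [hcst]) ?_
          exact condExp_add ((hXint (k+1)).const_mul l) ((hXsqint (k+1)).const_mul c) _
        have h3 : μ[fun ω => l * X (k+1) ω | ℱ k] =ᵐ[μ] fun ω => l * (μ[X (k+1) | ℱ k]) ω := by
          simpa [Pi.smul_def, smul_eq_mul] using condExp_smul (μ := μ) (m := ℱ k) l (X (k+1))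
        have h4 : μ[fun ω => c * X (k+1) ω ^ 2 | ℱ k]
            =ᵐ[μ] fun ω => c * (μ[fun ω' => X (k+1) ω' ^ 2 | ℱ k]) ω := by
          simpa [Pi.smul_def, smul_eq_mul] using condExp_smul (μ := μ) (m := ℱ k) c (fun ω => X (k+1) ω ^ 2)
        have h5 : μ[X (k+1) | ℱ k] ≤ᵐ[μ] 0 := by
          have h5a : μ[X (k+1) | ℱ k] ≤ᵐ[μ] μ[η (k+1) | ℱ k] :=
            condExp_mono (hXint (k+1)) (hint (k+1)) (ae_of_all μ fun ω => hXleη (k+1) ω)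
          have h5b := hmds (k+1) (Nat.one_le_iff_ne_zero.mpr (Nat.succ_ne_zero k))
          exact h5a.trans h5b
        have h6 : μ[fun ω' => X (k+1) ω' ^ 2 | ℱ k] ≤ᵐ[μ] σ (k+1) := by
          rw [hσc]
          exact condExp_mono (hXsqint (k+1)) (hint2 (k+1)) (ae_of_all μ fun ω => hXsq (k+1) ω)
        filter_upwards [h1, h2, h3, h4, h5, h6] with ω e1 e2 e3 e4 e5 e6
        have : (μ[H | ℱ k]) ω ≤ 1 + c * σ (k+1) ω := by
          rw [e2] at e1
          simp only [Pi.add_apply] at e1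
          rw [e3, e4] at e1
          have := mul_le_mul_of_nonneg_left e6 hc0
          have h5' : l * (μ[X (k+1)|ℱ k]) ω ≤ 0 := by
            have := mul_le_mul_of_nonneg_left e5 hl0.le
            simpa using this
          simp only [Pi.zero_apply] at e5
          linarith
        refine this.trans ?_
        linarith [Real.add_one_le_exp (c * σ (k+1) ω)]
      -- Step B : integral manipulations
      have hcondH_nonneg : (0:Ω → ℝ) ≤ᵐ[μ] μ[H | ℱ k] :=
        condExp_nonneg (ae_of_all μ fun ω => (hHpos ω).le)
      have hcondH_bdd : ∀ᵐ ω ∂μ, (μ[H | ℱ k]) ω ≤ Real.exp (l * u) := by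
        have := condExp_mono (μ := μ) (m := ℱ k) hHint (integrable_const (Real.exp (l * u)))
          (ae_of_all μ fun ω => hHle ω)
        have hcst := condExp_const (μ := μ) (ℱ.le k) (Real.exp (l * u))
        rw [hcst] at this
        exact this
      have hGcondHint : Integrable (fun ω => G ω * (μ[H | ℱ k]) ω) μ := by
        refine Integrable.mono' (integrable_const (Real.exp (l * (k * u)) * Real.exp (l * u)))
          ((hGmeas.mono hm).mul (stronglyMeasurable_condExp.mono hm)).aestronglyMeasurable ?_
        filter_upwards [hGbdd, hcondH_nonneg, hcondH_bdd] with ω h1 h2 h3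
        rw [Real.norm_eq_abs, abs_mul]
        rw [Real.norm_eq_abs] at h1
        exact mul_le_mul h1 (by rw [abs_of_nonneg h2]; exact h3) (abs_nonneg _) (Real.exp_pos _).le
      have hstep1 : ∫ ω, W (k+1) ω ∂μ = ∫ ω, G ω * (μ[H | ℱ k]) ω ∂μ := by
        rw [integral_congr_ae (ae_of_all μ hWGH)]
        have hpull : μ[G * H | ℱ k] =ᵐ[μ] G * μ[H | ℱ k] :=
          condExp_mul_of_stronglyMeasurable_left hGmeas hGHint hHint
        calc ∫ ω, G ω * H ω ∂μ = ∫ ω, (G * H) ω ∂μ := rfl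
          _ = ∫ ω, (μ[G * H | ℱ k]) ω ∂μ := (integral_condExp (f := G * H) hm).symm
          _ = ∫ ω, (G * μ[H | ℱ k]) ω ∂μ := integral_congr_ae hpull
          _ = ∫ ω, G ω * (μ[H | ℱ k]) ω ∂μ := rfl
      have hstep2 : ∫ ω, G ω * (μ[H | ℱ k]) ω ∂μ ≤ ∫ ω, W k ω ∂μ := by
        have hGW : ∀ ω, G ω * Real.exp (c * σ (k+1) ω) = W k ω := by
          intro ω
          show Real.exp (l * ∑ i ∈ Finset.Icc 1 k, X i ω - c * ∑ i ∈ Finset.Icc 1 k, σ i ω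
              - c * σ (k+1) ω) * Real.exp (c * σ (k+1) ω)
            = Real.exp (l * ∑ i ∈ Finset.Icc 1 k, X i ω - c * ∑ i ∈ Finset.Icc 1 k, σ i ω)
          rw [← Real.exp_add]
          congr 1
          ring
        have hGexpint : Integrable (fun ω => G ω * Real.exp (c * σ (k+1) ω)) μ :=
          (hWint k).congr (ae_of_all μ fun ω => (hGW ω).symm)
        have hmono : (fun ω => G ω * (μ[H | ℱ k]) ω)
            ≤ᵐ[μ] fun ω => G ω * Real.exp (c * σ (k+1) ω) := by
          filter_upwards [hA] with ω hω
          exact mul_le_mul_of_nonneg_left hω (Real.exp_pos _).le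
        calc ∫ ω, G ω * (μ[H | ℱ k]) ω ∂μ
            ≤ ∫ ω, G ω * Real.exp (c * σ (k+1) ω) ∂μ :=
              integral_mono_ae hGcondHint hGexpint hmono
          _ = ∫ ω, W k ω ∂μ := integral_congr_ae (ae_of_all μ fun ω => hGW ω)
      calc ∫ ω, W (k+1) ω ∂μ = ∫ ω, G ω * (μ[H | ℱ k]) ω ∂μ := hstep1
        _ ≤ ∫ ω, W k ω ∂μ := hstep2
        _ ≤ 1 := ih
  -- Markov step
  set ε : ℝ := Real.exp (l * z - c * v) with hε
  have hεpos : 0 < ε := Real.exp_pos _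
  have hsubset : {ω | z ≤ ∑ i ∈ Finset.Icc 1 n, min (η i ω) u ∧
      ∑ i ∈ Finset.Icc 1 n, (μ[fun ω' => (η i ω') ^ 2 | ℱ (i - 1)]) ω ≤ v}
      ⊆ {ω | ε ≤ W n ω} := by
    intro ω hω
    obtain ⟨h1, h2⟩ := hω
    have h1' : l * z ≤ l * ∑ i ∈ Finset.Icc 1 n, X i ω := mul_le_mul_of_nonneg_left h1 hl0.le
    have h2' : c * ∑ i ∈ Finset.Icc 1 n, σ i ω ≤ c * v := mul_le_mul_of_nonneg_left h2 hc0
    show ε ≤ W n ω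
    have : Real.exp (l * z - c * v)
        ≤ Real.exp (l * ∑ i ∈ Finset.Icc 1 n, X i ω - c * ∑ i ∈ Finset.Icc 1 n, σ i ω) :=
      Real.exp_le_exp.2 (by linarith)
    exact this
  have hmarkov := mul_meas_ge_le_integral_of_nonneg
    (ae_of_all μ fun ω => (Real.exp_pos _).le : 0 ≤ᵐ[μ] W n) (hWint n) ε
  have htoReal : (μ {ω | ε ≤ W n ω}).toReal ≤ Real.exp (c * v - l * z) := by
    have hint1 := (hind n)
    have h1 : ε * (μ {ω | ε ≤ W n ω}).toReal ≤ 1 := le_trans hmarkov hint1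
    have h2 : (μ {ω | ε ≤ W n ω}).toReal ≤ 1 / ε := by
      rw [le_div_iff₀ hεpos]
      linarith [h1, mul_comm ε (μ {ω | ε ≤ W n ω}).toReal]
    refine h2.trans (le_of_eq ?_)
    rw [hε, one_div, ← Real.exp_neg]
    congr 1
    ring
  have hcv : c * v - l * z = -z ^ 2 / (2 * z * u + 2 * v) := by
    have h1 : (1:ℝ) - l * u = v / (z * u + v) := by
      rw [hl]; field_simp; ring
    rw [hc, h1, hl]
    field_simp
    ring
  calc μ {ω | z ≤ ∑ i ∈ Finset.Icc 1 n, min (η i ω) u ∧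
        ∑ i ∈ Finset.Icc 1 n, (μ[fun ω' => (η i ω') ^ 2 | ℱ (i - 1)]) ω ≤ v}
      ≤ μ {ω | ε ≤ W n ω} := measure_mono hsubset
    _ = ENNReal.ofReal ((μ {ω | ε ≤ W n ω}).toReal) := (ENNReal.ofReal_toReal (measure_ne_top μ _)).symm
    _ ≤ ENNReal.ofReal (Real.exp (c * v - l * z)) := ENNReal.ofReal_le_ofReal htoReal
    _ = ENNReal.ofReal (Real.exp (-z ^ 2 / (2 * z * u + 2 * v))) := by rw [hcv]
end core

end freedman_aux

/-- High-dimensional Freedman inequality for finitely many martingale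
difference sequences with respect to a common filtration. -/
theorem freedman_inequality
    {Ω : Type*} [m0 : MeasurableSpace Ω] (μ : Measure Ω) [IsProbabilityMeasure μ]
    {A : Type*} [Fintype A] [Nonempty A]
    (n : ℕ) (ℱ : Filtration ℕ m0) (ξ : A → ℕ → Ω → ℝ)
    (hadapted : ∀ a i, StronglyMeasurable[ℱ i] (ξ a i))
    (hint : ∀ a i, Integrable (ξ a i) μ)
    (hint2 : ∀ a i, Integrable (fun ω => (ξ a i ω) ^ 2) μ)
    (hmds : ∀ a i, 1 ≤ i → μ[ξ a i | ℱ (i - 1)] =ᵐ[μ] 0)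
    (M V : A → Ω → ℝ)
    (hM : ∀ a ω, M a ω = ∑ i ∈ Finset.Icc 1 n, ξ a i ω)
    (hV : ∀ a ω, V a ω = ∑ i ∈ Finset.Icc 1 n,
        (μ[fun ω' => (ξ a i ω') ^ 2 | ℱ (i - 1)]) ω)
    (z u v : ℝ) (hz : 0 < z) (hu : 0 < u) (hv : 0 < v) :
    μ {ω | z ≤ ⨆ a, |M a ω|} ≤
      ∑ i ∈ Finset.Icc 1 n, μ {ω | u ≤ ⨆ a, |ξ a i ω|}
        + 2 * μ {ω | v ≤ ⨆ a, V a ω}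
        + 2 * (Fintype.card A : ℝ≥0∞) *
            ENNReal.ofReal (Real.exp (-z ^ 2 / (2 * z * u + 2 * v))) := by
  classical
  set B : ℝ≥0∞ := ENNReal.ofReal (Real.exp (-z ^ 2 / (2 * z * u + 2 * v))) with hB
  -- the per-(a, sign) events handled by the core lemma
  set Ep : A → Set Ω := fun a => {ω | z ≤ ∑ i ∈ Finset.Icc 1 n, min (ξ a i ω) u ∧
      ∑ i ∈ Finset.Icc 1 n, (μ[fun ω' => (ξ a i ω') ^ 2 | ℱ (i - 1)]) ω ≤ v} with hEp
  set Em : A → Set Ω := fun a => {ω | z ≤ ∑ i ∈ Finset.Icc 1 n, min (-ξ a i ω) u ∧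
      ∑ i ∈ Finset.Icc 1 n, (μ[fun ω' => (-ξ a i ω') ^ 2 | ℱ (i - 1)]) ω ≤ v} with hEm
  have hEpB : ∀ a, μ (Ep a) ≤ B := by
    intro a
    exact freedman_core μ n ℱ (fun i => ξ a i) (hadapted a) (hint a) (hint2 a)
      (fun i hi => (hmds a i hi).le) z u v hz hu hv
  have hEmB : ∀ a, μ (Em a) ≤ B := by
    intro a
    refine freedman_core μ n ℱ (fun i ω => -ξ a i ω) ?_ ?_ ?_ ?_ z u v hz hu hv
    · exact fun i => (hadapted a i).neg
    · exact fun i => (hint a i).neg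
    · intro i
      simpa [neg_sq] using hint2 a i
    · intro i hi
      have h1 : μ[fun ω => -ξ a i ω | ℱ (i-1)] =ᵐ[μ] -μ[ξ a i | ℱ (i-1)] :=
        condExp_neg (ξ a i) _
      refine h1.le.trans ?_
      filter_upwards [hmds a i hi] with ω hω
      simp [hω]
  -- decomposition of the target event
  have hbdd : ∀ (f : A → ℝ), BddAbove (Set.range f) := fun f =>
    Set.Finite.bddAbove (Set.finite_range f)
  have hsub : {ω | z ≤ ⨆ a, |M a ω|} ⊆
      ((⋃ i ∈ Finset.Icc 1 n, {ω | u ≤ ⨆ a, |ξ a i ω|}) ∪ {ω | v ≤ ⨆ a, V a ω})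
        ∪ ⋃ a, (Ep a ∪ Em a) := by
    intro ω hω
    by_cases hbad : ω ∈ (⋃ i ∈ Finset.Icc 1 n, {ω | u ≤ ⨆ a, |ξ a i ω|}) ∪ {ω | v ≤ ⨆ a, V a ω}
    · exact Set.mem_union_left _ hbad
    · refine Set.mem_union_right _ ?_
      rw [Set.mem_union] at hbad
      push_neg at hbad
      obtain ⟨hbad1, hbad2⟩ := hbad
      have hξ : ∀ i ∈ Finset.Icc 1 n, ∀ a, |ξ a i ω| < u := by
        intro i hi a
        have h1 : ω ∉ {ω | u ≤ ⨆ a, |ξ a i ω|} := by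
          intro hcon
          exact hbad1 (Set.mem_biUnion hi hcon)
        have h2 : (⨆ a, |ξ a i ω|) < u := lt_of_not_ge h1
        exact lt_of_le_of_lt (le_ciSup (f := fun a => |ξ a i ω|) (hbdd _) a) h2
      have hVlt : ∀ a, V a ω < v := by
        intro a
        have h2 : (⨆ a, V a ω) < v := lt_of_not_ge hbad2
        exact lt_of_le_of_lt (le_ciSup (f := fun a => V a ω) (hbdd _) a) h2
      obtain ⟨a, ha⟩ := exists_eq_ciSup_of_finite (f := fun a => |M a ω|)
      have hza : z ≤ |M a ω| := by
        rw [ha]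
        exact hω
      have hQa : ∑ i ∈ Finset.Icc 1 n, (μ[fun ω' => (ξ a i ω') ^ 2 | ℱ (i - 1)]) ω ≤ v := by
        rw [← hV a ω]
        exact (hVlt a).le
      rcases le_abs.mp hza with hpos | hneg
      · refine Set.mem_iUnion.2 ⟨a, Set.mem_union_left _ ?_⟩
        refine ⟨?_, hQa⟩
        have hsum : ∑ i ∈ Finset.Icc 1 n, min (ξ a i ω) u = ∑ i ∈ Finset.Icc 1 n, ξ a i ω := by
          apply Finset.sum_congr rfl
          intro i hi
          exact min_eq_left (le_of_lt (lt_of_le_of_lt (le_abs_self _) (hξ i hi a)))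
        rw [hsum, ← hM a ω]
        exact hpos
      · refine Set.mem_iUnion.2 ⟨a, Set.mem_union_right _ ?_⟩
        constructor
        · have hsum : ∑ i ∈ Finset.Icc 1 n, min (-ξ a i ω) u
              = ∑ i ∈ Finset.Icc 1 n, (-ξ a i ω) := by
            apply Finset.sum_congr rfl
            intro i hi
            refine min_eq_left (le_of_lt (lt_of_le_of_lt ?_ (hξ i hi a)))
            rw [abs_eq_max_neg]
            exact le_max_right _ _
          rw [hsum, Finset.sum_neg_distrib, ← hM a ω]
          exact hneg
        · simpa [neg_sq] using hQa
  -- measure arithmetic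
  have h1 : μ {ω | z ≤ ⨆ a, |M a ω|} ≤
      μ (⋃ i ∈ Finset.Icc 1 n, {ω | u ≤ ⨆ a, |ξ a i ω|}) + μ {ω | v ≤ ⨆ a, V a ω}
        + μ (⋃ a, (Ep a ∪ Em a)) :=
    le_trans (measure_mono hsub) (le_trans (measure_union_le _ _)
      (add_le_add_left (measure_union_le _ _) _))
  have h2 : μ (⋃ i ∈ Finset.Icc 1 n, {ω | u ≤ ⨆ a, |ξ a i ω|})
      ≤ ∑ i ∈ Finset.Icc 1 n, μ {ω | u ≤ ⨆ a, |ξ a i ω|} :=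
    measure_biUnion_finset_le _ _
  have h3 : μ (⋃ a, (Ep a ∪ Em a)) ≤ 2 * (Fintype.card A : ℝ≥0∞) * B := by
    have h3a : μ (⋃ a, (Ep a ∪ Em a)) ≤ ∑ a : A, μ (Ep a ∪ Em a) := by
      rw [show (⋃ a, (Ep a ∪ Em a)) = ⋃ a ∈ Finset.univ, (Ep a ∪ Em a) by simp]
      exact measure_biUnion_finset_le _ _
    refine h3a.trans ?_
    have h3b : ∀ a : A, μ (Ep a ∪ Em a) ≤ 2 * B := by
      intro a
      refine (measure_union_le _ _).trans ?_
      rw [two_mul]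
      exact add_le_add (hEpB a) (hEmB a)
    refine (Finset.sum_le_sum fun a _ => h3b a).trans ?_
    rw [Finset.sum_const, Finset.card_univ]
    rw [nsmul_eq_mul]
    ring_nf
    exact le_refl _
  calc μ {ω | z ≤ ⨆ a, |M a ω|}
      ≤ μ (⋃ i ∈ Finset.Icc 1 n, {ω | u ≤ ⨆ a, |ξ a i ω|}) + μ {ω | v ≤ ⨆ a, V a ω}
        + μ (⋃ a, (Ep a ∪ Em a)) := h1
    _ ≤ ∑ i ∈ Finset.Icc 1 n, μ {ω | u ≤ ⨆ a, |ξ a i ω|} + 2 * μ {ω | v ≤ ⨆ a, V a ω}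
        + 2 * (Fintype.card A : ℝ≥0∞) * B := by
        refine add_le_add (add_le_add h2 ?_) h3
        calc μ {ω | v ≤ ⨆ a, V a ω} = 1 * μ {ω | v ≤ ⨆ a, V a ω} := (one_mul _).symm
          _ ≤ 2 * μ {ω | v ≤ ⨆ a, V a ω} := by
              exact mul_le_mul_left (by norm_num) _
    _ = _ := rfl
end
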